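/- arXiv:2407.12854 — 5 statements merged into one kernel-verified Lean document; each statement's English description precedes it below -/
import Mathlib

section
/- Let D be partitioned into m pairwise disjoint shards D₁, …, Dₘ (so D = D₁ ∪ ⋯ ∪ Dₘ and Dᵢ ∩ Dⱼ = ∅ for i ≠ j), all scored by the same function s injective on D. If T is a top-K set of D and, for each i, Tᵢ is a top-K set of the shard Dᵢ, then T ⊆ T₁ ∪ ⋯ ∪ Tₘ; i.e., every document ranked in the global top-K is ranked in the top-K of its own shard. -/
/-- `T` is a top-`K` set of the finite document set `D` with respect to the score
function `s`: `T ⊆ D`, `|T| = min K |D|`, and every document in `T` scores at least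
as high as every document in `D \ T`. -/
def IsTopK {α : Type*} [DecidableEq α] (s : α → ℝ) (K : ℕ) (D T : Finset α) : Prop :=
  T ⊆ D ∧ T.card = min K D.card ∧ ∀ x ∈ T, ∀ y ∈ D \ T, s y ≤ s x

/-- Let `D` be partitioned into `m` pairwise disjoint shards `Dsh 0, …, Dsh (m-1)`,
all scored by the same function `s` injective on `D`.  If `T` is a top-`K` set of `D`
and each `Tsh i` is a top-`K` set of the shard `Dsh i`, then
`T ⊆ Tsh 0 ∪ ⋯ ∪ Tsh (m-1)`: every document ranked in the global top-`K` is ranked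
in the top-`K` of its own shard. -/
theorem global_topK_subset_union_shard_topK {α : Type*} [DecidableEq α]
    (m : ℕ) (D : Finset α) (Dsh : Fin m → Finset α)
    (hunion : Finset.univ.biUnion Dsh = D)
    (hdisj : ∀ i j : Fin m, i ≠ j → Disjoint (Dsh i) (Dsh j))
    (s : α → ℝ) (hinj : Set.InjOn s ↑D) (K : ℕ)
    (T : Finset α) (hT : IsTopK s K D T)
    (Tsh : Fin m → Finset α) (hTsh : ∀ i, IsTopK s K (Dsh i) (Tsh i)) :
    T ⊆ Finset.univ.biUnion Tsh := by
  intro x hx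
  obtain ⟨hTD, hTcard, hTtop⟩ := hT
  have hxD : x ∈ D := hTD hx
  obtain ⟨i, -, hxi⟩ := Finset.mem_biUnion.mp (hunion ▸ hxD)
  refine Finset.mem_biUnion.mpr ⟨i, Finset.mem_univ i, ?_⟩
  by_contra hxT
  obtain ⟨hsub, hcard, htop⟩ := hTsh i
  have hDi : Dsh i ⊆ D := by
    intro y hy
    rw [← hunion]; exact Finset.mem_biUnion.mpr ⟨i, Finset.mem_univ i, hy⟩
  by_cases hK : (Dsh i).card ≤ K
  · have heq : Tsh i = Dsh i := Finset.eq_of_subset_of_card_le hsub (by omega)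
    exact hxT (heq ▸ hxi)
  · push_neg at hK
    have hsubT : Tsh i ⊆ T := by
      intro y hy
      by_contra hyT
      have h1 : s y ≤ s x := hTtop x hx y (Finset.mem_sdiff.mpr ⟨hDi (hsub hy), hyT⟩)
      have h2 : s x ≤ s y := htop y hy x (Finset.mem_sdiff.mpr ⟨hxi, hxT⟩)
      have hxyeq : x = y := hinj hxD (hDi (hsub hy)) (le_antisymm h2 h1)
      exact hxT (hxyeq ▸ hy)
    have hlt : (Tsh i).card < T.card := Finset.card_lt_card ⟨hsubT, fun h => hxT (h hx)⟩
    omega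
end

section
/- Let T be a top-K set of D, let P be an element-wise predicate on documents, and suppose K' ≤ |{x ∈ T : P x}|. Then every top-K' set of the post-hoc-filtered retrieved pool {x ∈ T : P x} is contained in {x ∈ T : P x} and, moreover, every top-K' set of the filtered datastore {x ∈ D : P x} is a subset of {x ∈ T : P x}; i.e., all documents ranked in the top-K' of the filtered datastore survive the filter and already lie in the retrieved top-K pool. -/
/-- Let `T` be a top-`K` set of `D`, let `P` be an element-wise predicate on
documents, and suppose `K' ≤ |{x ∈ T : P x}|`.  Then every top-`K'` set of the
post-hoc-filtered retrieved pool `{x ∈ T : P x}` is contained in `{x ∈ T : P x}`,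
and moreover every top-`K'` set of the filtered datastore `{x ∈ D : P x}` is a
subset of `{x ∈ T : P x}`: all documents ranked in the top-`K'` of the filtered
datastore survive the filter and already lie in the retrieved top-`K` pool. -/
theorem filtered_topK'_subset_filtered_pool {α : Type*} [DecidableEq α]
    (D T : Finset α) (s : α → ℝ) (hinj : Set.InjOn s ↑D) (K K' : ℕ)
    (hT : IsTopK s K D T) (P : α → Prop) [DecidablePred P]
    (hK' : K' ≤ (T.filter P).card) :
    (∀ T' : Finset α, IsTopK s K' (T.filter P) T' → T' ⊆ T.filter P) ∧
    (∀ T' : Finset α, IsTopK s K' (D.filter P) T' → T' ⊆ T.filter P) := by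
  obtain ⟨hTD, hTcard, hTtop⟩ := hT
  have hsub : T.filter P ⊆ D.filter P := Finset.filter_subset_filter _ hTD
  constructor
  · intro T' hT'
    exact hT'.1
  · intro T' hT'
    obtain ⟨hT'D, hT'card, hT'top⟩ := hT'
    have hcard' : T'.card = K' := by
      rw [hT'card]
      exact min_eq_left (hK'.trans (Finset.card_le_card hsub))
    intro x hx
    by_contra hxT
    have hxD : x ∈ D.filter P := hT'D hx
    have hPx : P x := (Finset.mem_filter.mp hxD).2
    have hxD' : x ∈ D := (Finset.mem_filter.mp hxD).1
    have hxnT : x ∉ T := fun h => hxT (Finset.mem_filter.mpr ⟨h, hPx⟩)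
    -- there is y ∈ T.filter P \ T'
    have hne : ¬ (T.filter P ⊆ T') := by
      intro hss
      have : (T.filter P).card ≤ K' := hcard' ▸ Finset.card_le_card hss
      have heq : T.filter P = T' :=
        Finset.eq_of_subset_of_card_le hss (by omega)
      exact hxT (heq ▸ hx)
    obtain ⟨y, hyTP, hyT'⟩ := Finset.not_subset.mp hne
    have hyT : y ∈ T := (Finset.mem_filter.mp hyTP).1
    have h1 : s y ≤ s x := hT'top x hx y (Finset.mem_sdiff.mpr ⟨hsub hyTP, hyT'⟩)
    have h2 : s x ≤ s y := hTtop y hyT x (Finset.mem_sdiff.mpr ⟨hxD', hxnT⟩)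
    have : x = y := hinj hxD' (hTD hyT) (le_antisymm h2 h1)
    exact hxnT (this ▸ hyT)
end

section
/- (Post-hoc filtering equivalence, Lemma 2.) Let T be a top-K set of D, let P be an element-wise predicate on documents, and suppose K' ≤ |{x ∈ T : P x}| with K' ≤ K. Then a subset T' is a top-K' set of the filtered retrieved pool {x ∈ T : P x} if and only if T' is a top-K' set of the filtered datastore {x ∈ D : P x}; i.e., running deterministic deduplication/decontamination post hoc on the top-K retrieved documents and then taking the top-K' is equivalent to retrieving the top-K' from a datastore filtered before retrieval. -/
/-- Post-hoc filtering equivalence (Lemma 2).  Let `T` be a top-`K` set of `D`, let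
`P` be an element-wise predicate on documents, and suppose `K' ≤ |{x ∈ T : P x}|`
with `K' ≤ K`.  Then `T'` is a top-`K'` set of the filtered retrieved pool
`{x ∈ T : P x}` iff `T'` is a top-`K'` set of the filtered datastore
`{x ∈ D : P x}`: running a deterministic filter post hoc on the top-`K` retrieved
documents and then taking the top-`K'` is equivalent to retrieving the top-`K'`
from a datastore filtered before retrieval. -/
theorem posthoc_filter_topK'_iff {α : Type*} [DecidableEq α]
    (D T : Finset α) (s : α → ℝ) (hinj : Set.InjOn s ↑D) (K K' : ℕ)
    (hT : IsTopK s K D T) (P : α → Prop) [DecidablePred P]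
    (hK'card : K' ≤ (T.filter P).card) (hK'K : K' ≤ K) (T' : Finset α) :
    IsTopK s K' (T.filter P) T' ↔ IsTopK s K' (D.filter P) T' := by
  obtain ⟨hTD, hTcard, hTtop⟩ := hT
  have hsub : T.filter P ⊆ D.filter P := Finset.filter_subset_filter P hTD
  have hcard2 : K' ≤ (D.filter P).card := hK'card.trans (Finset.card_le_card hsub)
  constructor
  · rintro ⟨h1, h2, h3⟩
    rw [min_eq_left hK'card] at h2
    refine ⟨h1.trans hsub, by rw [min_eq_left hcard2]; exact h2, ?_⟩
    intro x hx y hy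
    rcases Finset.mem_sdiff.mp hy with ⟨hyD, hyT'⟩
    by_cases hyT : y ∈ T.filter P
    · exact h3 x hx y (Finset.mem_sdiff.mpr ⟨hyT, hyT'⟩)
    · have hyT2 : y ∉ T := fun h => hyT (Finset.mem_filter.mpr ⟨h, (Finset.mem_filter.mp hyD).2⟩)
      exact hTtop x (Finset.filter_subset P T (h1 hx)) y
        (Finset.mem_sdiff.mpr ⟨Finset.filter_subset P D hyD, hyT2⟩)
  · rintro ⟨h1, h2, h3⟩
    rw [min_eq_left hcard2] at h2
    have hsub' : T' ⊆ T.filter P := by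
      intro x hx
      by_contra hxT
      have hxD : x ∈ D.filter P := h1 hx
      have hxP : P x := (Finset.mem_filter.mp hxD).2
      have hxT2 : x ∉ T := fun h => hxT (Finset.mem_filter.mpr ⟨h, hxP⟩)
      have hne : ¬ T.filter P ⊆ T' := by
        intro hss
        have := Finset.eq_of_subset_of_card_le hss (by rw [h2]; exact hK'card)
        exact hxT (this ▸ hx)
      obtain ⟨z, hzF, hzT'⟩ := Finset.not_subset.mp hne
      have h4 : s z ≤ s x := h3 x hx z (Finset.mem_sdiff.mpr ⟨hsub hzF, hzT'⟩)
      have hzT : z ∈ T := (Finset.mem_filter.mp hzF).1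
      have h5 : s x ≤ s z := hTtop z hzT x
        (Finset.mem_sdiff.mpr ⟨Finset.filter_subset P D hxD, hxT2⟩)
      have : x = z := hinj (Finset.filter_subset P D hxD) (hTD hzT) (le_antisymm h5 h4)
      exact hzT' (this ▸ hx)
    refine ⟨hsub', by rw [min_eq_left hK'card]; exact h2, ?_⟩
    intro x hx y hy
    rcases Finset.mem_sdiff.mp hy with ⟨hyF, hyT'⟩
    exact h3 x hx y (Finset.mem_sdiff.mpr ⟨hsub hyF, hyT'⟩)
end

section
/- (Post-hoc subsampling equivalence, deterministic form of Lemma 3.) Let T be a top-K set of D, let S ⊆ α be the set of documents retained by a fixed subsampling decision (determined by the subsampling ratio and random seed), and suppose k ≤ |T ∩ S|. Then a subset T' is a top-k set of T ∩ S if and only if T' is a top-k set of D ∩ S; i.e., subsampling the retrieved top-K documents and taking the top-k of the survivors is equivalent to retrieving the top-k directly from the subsampled datastore, provided at least k of the top-K documents survive the subsampling. -/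
/-- Post-hoc subsampling equivalence (deterministic form of Lemma 3).  Let `T` be a
top-`K` set of `D`, let `S ⊆ α` be the set of documents retained by a fixed
subsampling decision, and suppose `k ≤ |T ∩ S|`.  Then `T'` is a top-`k` set of
`T ∩ S` iff `T'` is a top-`k` set of `D ∩ S`: subsampling the retrieved top-`K`
documents and taking the top-`k` of the survivors is equivalent to retrieving the
top-`k` directly from the subsampled datastore, provided at least `k` of the
top-`K` documents survive the subsampling. -/
theorem posthoc_subsampling_topk_iff {α : Type*} [DecidableEq α]
    (D T : Finset α) (s : α → ℝ) (hinj : Set.InjOn s ↑D) (K k : ℕ)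
    (hT : IsTopK s K D T) (S : Set α) [DecidablePred (· ∈ S)]
    (hk : k ≤ (T.filter (· ∈ S)).card) (T' : Finset α) :
    IsTopK s k (T.filter (· ∈ S)) T' ↔ IsTopK s k (D.filter (· ∈ S)) T' := by
  obtain ⟨hTD, hTcard, hTtop⟩ := hT
  have hTS_sub : T.filter (· ∈ S) ⊆ D.filter (· ∈ S) :=
    Finset.filter_subset_filter _ hTD
  have hDScard : k ≤ (D.filter (· ∈ S)).card := le_trans hk (Finset.card_le_card hTS_sub)
  constructor
  · rintro ⟨h1, h2, h3⟩
    refine ⟨h1.trans hTS_sub, ?_, ?_⟩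
    · rw [h2, min_eq_left hk, min_eq_left hDScard]
    · intro x hx y hy
      rw [Finset.mem_sdiff] at hy
      obtain ⟨hyD, hyT'⟩ := hy
      by_cases hyT : y ∈ T
      · exact h3 x hx y (Finset.mem_sdiff.mpr
          ⟨Finset.mem_filter.mpr ⟨hyT, (Finset.mem_filter.mp hyD).2⟩, hyT'⟩)
      · have hxT : x ∈ T := (Finset.mem_filter.mp (h1 hx)).1
        exact hTtop x hxT y (Finset.mem_sdiff.mpr ⟨(Finset.mem_filter.mp hyD).1, hyT⟩)
  · rintro ⟨h1, h2, h3⟩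
    have hcard : T'.card = k := by rw [h2, min_eq_left hDScard]
    have hsub : T' ⊆ T.filter (· ∈ S) := by
      intro x hx
      have hxDS := h1 hx
      have hxD := (Finset.mem_filter.mp hxDS).1
      have hxS := (Finset.mem_filter.mp hxDS).2
      refine Finset.mem_filter.mpr ⟨?_, hxS⟩
      by_contra hxT
      have hnot : ¬ (T.filter (· ∈ S) ⊆ T') := by
        intro h
        have hle : (T.filter (· ∈ S)).card ≤ (T'.erase x).card := by
          apply Finset.card_le_card
          intro z hz
          refine Finset.mem_erase.mpr ⟨?_, h hz⟩
          rintro rfl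
          exact hxT (Finset.mem_filter.mp hz).1
        have : k ≤ (T'.erase x).card := le_trans hk hle
        have h2' : (T'.erase x).card < k := by
          rw [← hcard]; exact Finset.card_erase_lt_of_mem hx
        omega
      obtain ⟨y, hyTS, hyT'⟩ := Finset.not_subset.mp hnot
      have hyT := (Finset.mem_filter.mp hyTS).1
      have hle1 : s y ≤ s x := h3 x hx y (Finset.mem_sdiff.mpr ⟨hTS_sub hyTS, hyT'⟩)
      have hle2 : s x ≤ s y := hTtop y hyT x (Finset.mem_sdiff.mpr ⟨hxD, hxT⟩)
      have hxy : x = y := hinj (Finset.mem_coe.mpr hxD) (Finset.mem_coe.mpr (hTD hyT))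
        (le_antisymm hle2 hle1)
      exact hyT' (hxy ▸ hx)
    refine ⟨hsub, ?_, ?_⟩
    · rw [hcard, min_eq_left hk]
    · intro x hx y hy
      rw [Finset.mem_sdiff] at hy
      exact h3 x hx y (Finset.mem_sdiff.mpr ⟨hTS_sub hy.1, hy.2⟩)
end

section
/- (Pipeline equivalence, Proposition 1, deterministic form.) Let D be partitioned into m pairwise disjoint shards D₁, …, Dₘ, all scored by the same function s injective on D; let Tᵢ be a top-K set of each shard Dᵢ, let T be a top-K set of the merged pool T₁ ∪ ⋯ ∪ Tₘ, let P be an element-wise predicate (deterministic deduplication/decontamination filter), and let S ⊆ α be the set retained by a fixed subsampling decision. If k ≤ |{x ∈ T : P x} ∩ S|, then a subset T' is a top-k set of {x ∈ T : P x} ∩ S if and only if T' is a top-k set of {x ∈ D : P x} ∩ S; i.e., the full pipeline of distributed retrieval, merging, post-hoc filtering, post-hoc subsampling, and taking the top-k returns exactly the documents obtained by filtering and subsampling the entire datastore first and then retrieving the top-k. -/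
/-- Pipeline equivalence (Proposition 1, deterministic form).  Let `D` be
partitioned into `m` pairwise disjoint shards `Dsh i`, all scored by the same
function `s` injective on `D`; let `Tsh i` be a top-`K` set of each shard `Dsh i`,
let `T` be a top-`K` set of the merged pool `Tsh 0 ∪ ⋯ ∪ Tsh (m-1)`, let `P` be an
element-wise predicate (deterministic deduplication/decontamination filter), and let
`S ⊆ α` be the set retained by a fixed subsampling decision.  If
`k ≤ |{x ∈ T : P x} ∩ S|`, then `T'` is a top-`k` set of `{x ∈ T : P x} ∩ S` iff
`T'` is a top-`k` set of `{x ∈ D : P x} ∩ S`: the full pipeline of distributed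
retrieval, merging, post-hoc filtering, post-hoc subsampling, and taking the top-`k`
returns exactly the documents obtained by filtering and subsampling the entire
datastore first and then retrieving the top-`k`. -/
theorem pipeline_equivalence {α : Type*} [DecidableEq α]
    (m : ℕ) (D : Finset α) (Dsh : Fin m → Finset α)
    (hunion : Finset.univ.biUnion Dsh = D)
    (hdisj : ∀ i j : Fin m, i ≠ j → Disjoint (Dsh i) (Dsh j))
    (s : α → ℝ) (hinj : Set.InjOn s ↑D) (K k : ℕ)
    (Tsh : Fin m → Finset α) (hTsh : ∀ i, IsTopK s K (Dsh i) (Tsh i))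
    (T : Finset α) (hT : IsTopK s K (Finset.univ.biUnion Tsh) T)
    (P : α → Prop) [DecidablePred P] (S : Set α) [DecidablePred (· ∈ S)]
    (hk : k ≤ ((T.filter P).filter (· ∈ S)).card) (T' : Finset α) :
    IsTopK s k ((T.filter P).filter (· ∈ S)) T' ↔
      IsTopK s k ((D.filter P).filter (· ∈ S)) T' := by
  classical
  set pool := Finset.univ.biUnion Tsh with hpool
  have hTshD : ∀ i, Tsh i ⊆ Dsh i := fun i => (hTsh i).1
  have hpoolD : pool ⊆ D := by
    intro x hx
    obtain ⟨i, -, hxi⟩ := Finset.mem_biUnion.1 hx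
    rw [← hunion]
    exact Finset.mem_biUnion.2 ⟨i, Finset.mem_univ i, hTshD i hxi⟩
  have hTD : T ⊆ D := hT.1.trans hpoolD
  -- strict inequality helper
  have hstrict : ∀ x ∈ D, ∀ y ∈ D, x ≠ y → s y ≤ s x → s y < s x := by
    intro x hx y hy hne hle
    rcases lt_or_eq_of_le hle with h | h
    · exact h
    · exact absurd (hinj hy hx h) (fun e => hne e.symm)
  -- key lemma
  have key : ∀ y ∈ D, y ∉ T → ∀ x ∈ T, s y < s x := by
    intro y hyD hyT x hxT
    have hxD : x ∈ D := hTD hxT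
    have hxy : x ≠ y := fun e => hyT (e ▸ hxT)
    by_cases hyp : y ∈ pool
    · exact hstrict x hxD y hyD hxy (hT.2.2 x hxT y (Finset.mem_sdiff.2 ⟨hyp, hyT⟩))
    · -- y is in some shard but not in its top-K
      obtain ⟨i, -, hyi⟩ := Finset.mem_biUnion.1 (hunion ▸ hyD)
      have hyTsh : y ∉ Tsh i := fun h =>
        hyp (Finset.mem_biUnion.2 ⟨i, Finset.mem_univ i, h⟩)
      have hss : Tsh i ⊂ Dsh i := ⟨hTshD i, fun h => hyTsh (h hyi)⟩
      have hlt : (Tsh i).card < (Dsh i).card := Finset.card_lt_card hss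
      have hcardT : (Tsh i).card = K := by
        have h := (hTsh i).2.1
        rcases le_total K (Dsh i).card with h' | h'
        · rw [min_eq_left h'] at h; exact h
        · rw [min_eq_right h'] at h; omega
      have hKpool : K ≤ pool.card := by
        calc K = (Tsh i).card := hcardT.symm
        _ ≤ pool.card := Finset.card_le_card
            (Finset.subset_biUnion_of_mem Tsh (Finset.mem_univ i))
      have hTcard : T.card = K := by
        rw [hT.2.1, min_eq_left hKpool]
      by_cases hxTsh : x ∈ Tsh i
      · exact hstrict x hxD y hyD hxy
          ((hTsh i).2.2 x hxTsh y (Finset.mem_sdiff.2 ⟨hyi, hyTsh⟩))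
      · -- there is z ∈ Tsh i \ T
        have : ¬ Tsh i ⊆ T := by
          intro hsub
          have : Tsh i = T := Finset.eq_of_subset_of_card_le hsub (by omega)
          exact hxTsh (this ▸ hxT)
        obtain ⟨z, hzTsh, hzT⟩ := Finset.not_subset.1 this
        have hzpool : z ∈ pool := Finset.mem_biUnion.2 ⟨i, Finset.mem_univ i, hzTsh⟩
        have hzD : z ∈ D := hpoolD hzpool
        have h1 : s y < s z := hstrict z hzD y hyD
          (fun e => hyp (e ▸ hzpool)) ((hTsh i).2.2 z hzTsh y (Finset.mem_sdiff.2 ⟨hyi, hyTsh⟩))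
        have h2 : s z ≤ s x := hT.2.2 x hxT z (Finset.mem_sdiff.2 ⟨hzpool, hzT⟩)
        exact h1.trans_le h2
  set FT := (T.filter P).filter (· ∈ S) with hFT
  set FD := (D.filter P).filter (· ∈ S) with hFD
  have hFsub : FT ⊆ FD := Finset.filter_subset_filter _ (Finset.filter_subset_filter _ hTD)
  have hkD : k ≤ FD.card := hk.trans (Finset.card_le_card hFsub)
  have hmemFT : ∀ {y}, y ∈ FT ↔ (y ∈ T ∧ P y ∧ y ∈ S) := by
    intro y; simp [hFT, Finset.mem_filter, and_assoc]
  have hmemFD : ∀ {y}, y ∈ FD ↔ (y ∈ D ∧ P y ∧ y ∈ S) := by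
    intro y; simp [hFD, Finset.mem_filter, and_assoc]
  constructor
  · rintro ⟨hsub, hcard, htop⟩
    refine ⟨hsub.trans hFsub, ?_, ?_⟩
    · rw [hcard]; omega
    · intro x hx y hy
      rcases Finset.mem_sdiff.1 hy with ⟨hyFD, hyT'⟩
      by_cases hyFT : y ∈ FT
      · exact htop x hx y (Finset.mem_sdiff.2 ⟨hyFT, hyT'⟩)
      · obtain ⟨hyD, hyP, hyS⟩ := hmemFD.1 hyFD
        have hyT : y ∉ T := fun h => hyFT (hmemFT.2 ⟨h, hyP, hyS⟩)
        have hxT : x ∈ T := (hmemFT.1 (hsub hx)).1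
        exact (key y hyD hyT x hxT).le
  · rintro ⟨hsub, hcard, htop⟩
    have hcard' : T'.card = k := by rw [hcard]; omega
    have hsubFT : T' ⊆ FT := by
      intro x hxT'
      by_contra hxFT
      obtain ⟨hxD, hxP, hxS⟩ := hmemFD.1 (hsub hxT')
      have hxT : x ∉ T := fun h => hxFT (hmemFT.2 ⟨h, hxP, hxS⟩)
      have : ¬ FT ⊆ T' := by
        intro hsub2
        have h1 : FT.card ≤ T'.card := Finset.card_le_card hsub2
        have h2 : insert x FT ⊆ T' := Finset.insert_subset hxT' hsub2
        have h3 : (insert x FT).card ≤ T'.card := Finset.card_le_card h2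
        rw [Finset.card_insert_of_notMem hxFT] at h3
        omega
      obtain ⟨z, hzFT, hzT'⟩ := Finset.not_subset.1 this
      have hzle : s z ≤ s x := htop x hxT' z (Finset.mem_sdiff.2 ⟨hFsub hzFT, hzT'⟩)
      have hzT : z ∈ T := (hmemFT.1 hzFT).1
      exact absurd hzle (not_le.2 (key x hxD hxT z hzT))
    refine ⟨hsubFT, by omega, ?_⟩
    intro x hx y hy
    rcases Finset.mem_sdiff.1 hy with ⟨hyFT, hyT'⟩
    exact htop x hx y (Finset.mem_sdiff.2 ⟨hFsub hyFT, hyT'⟩)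
end
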